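/- arXiv:math-ph/0001033 — 5 statements merged into one kernel-verified Lean document; each statement's English description precedes it below -/
import Mathlib

section
/- For all ε ∈ (0,1/2), β ∈ (0,∞) and λ ∈ ℂ, with μ = √(ε²+|λ|²), the one-site BCS Gibbs density matrix satisfies Tr(ρ_λ · σ^-) = λ · tanh(βμ)/(2μ). Consequently, λ satisfies the self-consistency (gap) equation Tr(ρ_λ · σ^-) = λ if and only if λ·(1 − tanh(βμ)/(2μ)) = 0. -/
open Matrix

/-- Matrix exponential on 2×2 complex matrices. -/
noncomputable def mexp (A : Matrix (Fin 2) (Fin 2) ℂ) : Matrix (Fin 2) (Fin 2) ℂ :=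
  NormedSpace.exp A

/-- Pauli matrix σ^z. -/
def σz : Matrix (Fin 2) (Fin 2) ℂ := !![1, 0; 0, -1]
/-- Pauli matrix σ^+. -/
def σp : Matrix (Fin 2) (Fin 2) ℂ := !![0, 1; 0, 0]
/-- Pauli matrix σ^-. -/
def σm : Matrix (Fin 2) (Fin 2) ℂ := !![0, 0; 1, 0]

/-- μ = √(ε² + |λ|²). -/
noncomputable def μBCS (ε : ℝ) (l : ℂ) : ℝ := Real.sqrt (ε ^ 2 + ‖l‖ ^ 2)

/-- One-site effective Hamiltonian h_λ = ε·σ^z − λ·σ^+ − (conj λ)·σ^-. -/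
noncomputable def hBCS (ε : ℝ) (l : ℂ) : Matrix (Fin 2) (Fin 2) ℂ :=
  (ε : ℂ) • σz - l • σp - (starRingEnd ℂ l) • σm

/-- One-site Gibbs density matrix ρ_λ = exp(−β h_λ)/Tr exp(−β h_λ). -/
noncomputable def ρBCS (ε β : ℝ) (l : ℂ) : Matrix (Fin 2) (Fin 2) ℂ :=
  (Matrix.trace (mexp (-(β : ℂ) • hBCS ε l)))⁻¹ • mexp (-(β : ℂ) • hBCS ε l)

/-- Spectral projection P₊ = (1/2)(1 + h_λ/μ). -/
noncomputable def Pplus (ε : ℝ) (l : ℂ) : Matrix (Fin 2) (Fin 2) ℂ :=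
  (1 / 2 : ℂ) • (1 + (μBCS ε l : ℂ)⁻¹ • hBCS ε l)

/-- Spectral projection P₋ = (1/2)(1 − h_λ/μ). -/
noncomputable def Pminus (ε : ℝ) (l : ℂ) : Matrix (Fin 2) (Fin 2) ℂ :=
  (1 / 2 : ℂ) • (1 - (μBCS ε l : ℂ)⁻¹ • hBCS ε l)

/-- E₋(A) = P₋·A·P₊. -/
noncomputable def Eminus (ε : ℝ) (l : ℂ) (A : Matrix (Fin 2) (Fin 2) ℂ) :
    Matrix (Fin 2) (Fin 2) ℂ := Pminus ε l * A * Pplus ε l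

/-- E₀(A) = P₋·A·P₋ + P₊·A·P₊. -/
noncomputable def Ezero (ε : ℝ) (l : ℂ) (A : Matrix (Fin 2) (Fin 2) ℂ) :
    Matrix (Fin 2) (Fin 2) ℂ := Pminus ε l * A * Pminus ε l + Pplus ε l * A * Pplus ε l

/-- E₊(A) = P₊·A·P₋. -/
noncomputable def Eplus (ε : ℝ) (l : ℂ) (A : Matrix (Fin 2) (Fin 2) ℂ) :
    Matrix (Fin 2) (Fin 2) ℂ := Pplus ε l * A * Pminus ε l

/-- The complex structure map J(A) = i·(E₊(A) − E₋(A)). -/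
noncomputable def Jmap (ε : ℝ) (l : ℂ) (A : Matrix (Fin 2) (Fin 2) ℂ) :
    Matrix (Fin 2) (Fin 2) ℂ := Complex.I • (Eplus ε l A - Eminus ε l A)

/-- Reduced symmetry generator σ̂^z = (E₊ + E₋)(σ^z). -/
noncomputable def σhat (ε : ℝ) (l : ℂ) : Matrix (Fin 2) (Fin 2) ℂ :=
  Eplus ε l σz + Eminus ε l σz

/-- Canonical order parameter Jσ̂^z = i·(E₊ − E₋)(σ^z). -/
noncomputable def Jσhat (ε : ℝ) (l : ℂ) : Matrix (Fin 2) (Fin 2) ℂ :=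
  Jmap ε l σz


/-! Since `h_λ² = μ²`, the matrix `h_λ / μ` is an involution, so summing the even and odd parts
of the exponential series gives `exp (-β h_λ) = cosh (βμ) - sinh (βμ) h_λ / μ`. As `h_λ` and `σ^-`
are traceless and `Tr (h_λ σ^-) = -λ`, this yields `Tr (ρ_λ σ^-) = λ sinh (βμ) / (2 μ cosh (βμ))`. -/

open NormedSpace in
theorem exp_smul_eq_cosh_add_sinh_of_mul_self_eq_one {A : Type*} [Ring A] [Algebra ℂ A]
    [TopologicalSpace A] [IsTopologicalRing A] [ContinuousSMul ℂ A] [T2Space A]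
    {B : A} (hB : B * B = 1) (z : ℂ) :
    exp (z • B) = Complex.cosh z • (1 : A) + Complex.sinh z • B := by
  have hB_even : ∀ n : ℕ, B ^ (2 * n) = 1 := fun n => by rw [pow_mul, sq, hB, one_pow]
  rw [exp_eq_tsum ℂ]
  refine HasSum.tsum_eq (HasSum.even_add_odd ?_ ?_)
  · convert (Complex.hasSum_cosh z).smul_const (1 : A) using 2 with n
    rw [smul_pow, hB_even, smul_smul, div_eq_inv_mul]
  · convert (Complex.hasSum_sinh z).smul_const B using 2 with n
    rw [smul_pow, pow_succ B, hB_even, one_mul, smul_smul, div_eq_inv_mul]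

theorem sq_μBCS (ε : ℝ) (l : ℂ) : (μBCS ε l : ℂ) ^ 2 = (ε : ℂ) ^ 2 + l * starRingEnd ℂ l := by
  rw [Complex.mul_conj, Complex.normSq_eq_norm_sq, μBCS, ← Complex.ofReal_pow,
    Real.sq_sqrt (by positivity)]
  push_cast
  ring

theorem μBCS_pos {ε : ℝ} (hε : ε ≠ 0) (l : ℂ) : 0 < μBCS ε l :=
  Real.sqrt_pos.mpr (by positivity)

theorem hBCS_mul_self (ε : ℝ) (l : ℂ) :
    hBCS ε l * hBCS ε l = ((μBCS ε l : ℂ) ^ 2) • 1 := by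
  rw [sq_μBCS]
  ext i j
  fin_cases i <;> fin_cases j <;> simp [hBCS, σz, σp, σm, Matrix.mul_apply] <;> ring

theorem trace_hBCS (ε : ℝ) (l : ℂ) : trace (hBCS ε l) = 0 := by
  simp [hBCS, σz, σp, σm, trace_fin_two]

theorem trace_hBCS_mul_σm (ε : ℝ) (l : ℂ) : trace (hBCS ε l * σm) = -l := by
  simp [hBCS, σz, σp, σm, trace_fin_two]

theorem trace_σm : trace σm = 0 := by
  simp [σm, trace_fin_two]

theorem mexp_neg_smul_hBCS (ε β : ℝ) {l : ℂ} (hμ : μBCS ε l ≠ 0) :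
    mexp (-(β : ℂ) • hBCS ε l) =
      (Real.cosh (β * μBCS ε l) : ℂ) • 1 -
        (Real.sinh (β * μBCS ε l) / μBCS ε l : ℂ) • hBCS ε l := by
  have hμ' : (μBCS ε l : ℂ) ≠ 0 := Complex.ofReal_ne_zero.mpr hμ
  have hB : ((μBCS ε l : ℂ)⁻¹ • hBCS ε l) * ((μBCS ε l : ℂ)⁻¹ • hBCS ε l) = 1 := by
    rw [smul_mul_smul_comm, hBCS_mul_self, smul_smul, ← sq, ← mul_pow, inv_mul_cancel₀ hμ',
      one_pow, one_smul]
  have hscale : -(β : ℂ) • hBCS ε l =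
      (-(β * μBCS ε l : ℂ)) • ((μBCS ε l : ℂ)⁻¹ • hBCS ε l) := by
    rw [smul_smul, neg_mul, mul_assoc, mul_inv_cancel₀ hμ', mul_one]
  rw [mexp, hscale, exp_smul_eq_cosh_add_sinh_of_mul_self_eq_one hB, Complex.cosh_neg,
    Complex.sinh_neg, smul_smul, neg_mul, neg_smul, ← sub_eq_add_neg, ← div_eq_mul_inv]
  push_cast
  rfl

theorem trace_ρBCS_mul_σm (β : ℝ) {ε : ℝ} {l : ℂ} (hμ : μBCS ε l ≠ 0) :
    trace (ρBCS ε β l * σm) = l * (Real.tanh (β * μBCS ε l) : ℂ) / (2 * (μBCS ε l : ℂ)) := by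
  have hcosh : (Real.cosh (β * μBCS ε l) : ℂ) ≠ 0 :=
    Complex.ofReal_ne_zero.mpr (Real.cosh_pos _).ne'
  have hμ' : (μBCS ε l : ℂ) ≠ 0 := Complex.ofReal_ne_zero.mpr hμ
  rw [ρBCS, smul_mul_assoc, trace_smul, mexp_neg_smul_hBCS ε β hμ, sub_mul, smul_mul_assoc,
    smul_mul_assoc, one_mul]
  simp only [trace_sub, trace_smul, trace_one, trace_σm, trace_hBCS, trace_hBCS_mul_σm,
    Fintype.card_fin, smul_eq_mul, Real.tanh_eq_sinh_div_cosh, Complex.ofReal_div,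
    Nat.cast_ofNat, mul_zero, sub_zero, zero_sub]
  field_simp

theorem bcs_order_parameter_and_gap_equation_general
    (ε β : ℝ) (hε : ε ∈ Set.Ioo (0 : ℝ) (1 / 2)) (l : ℂ) :
    Matrix.trace (ρBCS ε β l * σm) =
      l * (Real.tanh (β * μBCS ε l) : ℂ) / (2 * (μBCS ε l : ℂ)) ∧
    (Matrix.trace (ρBCS ε β l * σm) = l ↔
      l * (1 - (Real.tanh (β * μBCS ε l) : ℂ) / (2 * (μBCS ε l : ℂ))) = 0) := by
  have horder := trace_ρBCS_mul_σm β (μBCS_pos hε.1.ne' l).ne'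
  refine ⟨horder, ?_⟩
  rw [horder, mul_sub, mul_one, sub_eq_zero, mul_div_assoc, eq_comm]

/-- Tr(ρ_λ·σ^-) = λ·tanh(βμ)/(2μ), and the self-consistency (gap) equation
Tr(ρ_λ·σ^-) = λ holds iff λ·(1 − tanh(βμ)/(2μ)) = 0. -/
theorem bcs_order_parameter_and_gap_equation
    (ε β : ℝ) (hε : ε ∈ Set.Ioo (0 : ℝ) (1 / 2)) (hβ : 0 < β) (l : ℂ) :
    Matrix.trace (ρBCS ε β l * σm) =
      l * (Real.tanh (β * μBCS ε l) : ℂ) / (2 * (μBCS ε l : ℂ)) ∧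
    (Matrix.trace (ρBCS ε β l * σm) = l ↔
      l * (1 - (Real.tanh (β * μBCS ε l) : ℂ) / (2 * (μBCS ε l : ℂ))) = 0) :=
  bcs_order_parameter_and_gap_equation_general ε β hε l
end

section
/- For every ε ∈ (0,1/2) there is a unique β_c > 0 such that tanh(β_c·ε) = 2ε, and for every β > β_c there exists r > 0 such that tanh(β·√(ε²+r²)) = 2·√(ε²+r²); that is, for β > β_c the BCS gap equation λ·(1 − tanh(βμ)/(2μ)) = 0 with μ = √(ε²+|λ|²) has nonzero solutions λ (namely all λ with |λ| = r), describing the superconducting phase. -/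
/-!
The critical inverse temperature is explicit: `β_c = artanh (2ε) / ε`, and it is unique because
`tanh` is injective. For `β > β_c` the function `μ ↦ tanh (β μ) - 2 μ` is positive at `μ = ε`
and negative at `μ = 1/2` (as `tanh < 1`), so it vanishes at some `μ > ε`; the gap
`r = √(μ² - ε²)` then satisfies `√(ε² + r²) = μ`, and every `λ` with `|λ| = r` solves the
gap equation because its second factor vanishes.
-/

open Real

namespace Real

theorem tanh_strictMono : StrictMono tanh := fun x y hxy => by
  have mem (z : ℝ) : tanh z ∈ Set.Ioo (-1) 1 := ⟨neg_one_lt_tanh z, tanh_lt_one z⟩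
  rwa [← artanh_lt_artanh_iff (mem x) (mem y), artanh_tanh, artanh_tanh]

theorem continuous_tanh : Continuous tanh := by
  rw [show tanh = fun x => sinh x / cosh x from funext fun x => tanh_eq_sinh_div_cosh x]
  exact continuous_sinh.div continuous_cosh fun x => (cosh_pos x).ne'

end Real

theorem exists_gt_tanh_mul_eq_two_mul {β μ₀ : ℝ} (h : 2 * μ₀ < tanh (β * μ₀)) :
    ∃ μ, μ₀ < μ ∧ tanh (β * μ) = 2 * μ := by
  let f : ℝ → ℝ := fun μ => tanh (β * μ) - 2 * μ
  have hμ₀ : μ₀ ≤ 1 / 2 := by linarith [tanh_lt_one (β * μ₀)]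
  have hf : ContinuousOn f (Set.Icc μ₀ (1 / 2)) := by
    unfold f
    exact (continuous_tanh.comp (continuous_const_mul β)).sub (continuous_const_mul 2)
      |>.continuousOn
  have hzero : (0 : ℝ) ∈ Set.Ioo (f (1 / 2)) (f μ₀) :=
    ⟨show tanh (β * (1 / 2)) - 2 * (1 / 2) < 0 by linarith [tanh_lt_one (β * (1 / 2))],
      show 0 < tanh (β * μ₀) - 2 * μ₀ by linarith⟩
  obtain ⟨μ, hμ, hfμ⟩ := intermediate_value_Ioo' hμ₀ hf hzero
  exact ⟨μ, hμ.1, by linarith [show f μ = 0 from hfμ]⟩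

theorem mul_one_sub_tanh_div_eq_zero_of_tanh_eq {β μ : ℝ} (l : ℂ) (hμ : μ ≠ 0)
    (h : tanh (β * μ) = 2 * μ) :
    l * (1 - (tanh (β * μ) : ℂ) / (2 * (μ : ℂ))) = 0 := by
  have h2μ : (2 * (μ : ℂ)) ≠ 0 := mul_ne_zero two_ne_zero (Complex.ofReal_ne_zero.2 hμ)
  rw [h, Complex.ofReal_mul, Complex.ofReal_ofNat, div_self h2μ, sub_self, mul_zero]

/-- for every ε ∈ (0,1/2) there is a unique β_c > 0 with tanh(β_c·ε) = 2ε, and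
for every β > β_c there is r > 0 with tanh(β·√(ε²+r²)) = 2·√(ε²+r²); hence for β > β_c
the BCS gap equation λ·(1 − tanh(β√(ε²+|λ|²))/(2√(ε²+|λ|²))) = 0 has nonzero solutions,
namely all λ with |λ| = r. -/
theorem bcs_critical_temperature_and_superconducting_phase
    (ε : ℝ) (hε : ε ∈ Set.Ioo (0 : ℝ) (1 / 2)) :
    ∃ βc : ℝ, 0 < βc ∧ Real.tanh (βc * ε) = 2 * ε ∧
      (∀ β' : ℝ, 0 < β' → Real.tanh (β' * ε) = 2 * ε → β' = βc) ∧
      ∀ β : ℝ, βc < β → ∃ r : ℝ, 0 < r ∧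
        Real.tanh (β * Real.sqrt (ε ^ 2 + r ^ 2)) = 2 * Real.sqrt (ε ^ 2 + r ^ 2) ∧
        ∀ l : ℂ, ‖l‖ = r → l ≠ 0 ∧
          l * (1 - (Real.tanh (β * Real.sqrt (ε ^ 2 + ‖l‖ ^ 2)) : ℂ) /
            (2 * (Real.sqrt (ε ^ 2 + ‖l‖ ^ 2) : ℂ))) = 0 := by
  obtain ⟨hε0, hε1⟩ := hε
  have h2ε : 2 * ε ∈ Set.Ioo (-1 : ℝ) 1 := ⟨by linarith, by linarith⟩
  refine ⟨artanh (2 * ε) / ε, div_pos (artanh_pos ⟨by linarith, h2ε.2⟩) hε0, ?_, ?_, ?_⟩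
  · rw [div_mul_cancel₀ _ hε0.ne', tanh_artanh h2ε]
  · intro β' _ hβ'
    rw [eq_div_iff hε0.ne', ← hβ', artanh_tanh]
  intro β hβ
  have hgap : 2 * ε < tanh (β * ε) := by
    rw [← tanh_artanh h2ε]
    exact tanh_strictMono ((div_lt_iff₀ hε0).1 hβ)
  obtain ⟨μ, hεμ, hμ⟩ := exists_gt_tanh_mul_eq_two_mul hgap
  have hr : √(ε ^ 2 + √(μ ^ 2 - ε ^ 2) ^ 2) = μ := by
    rw [sq_sqrt (by nlinarith), add_sub_cancel, sqrt_sq (by linarith)]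
  have hr0 : 0 < √(μ ^ 2 - ε ^ 2) := sqrt_pos.2 (by nlinarith)
  refine ⟨√(μ ^ 2 - ε ^ 2), hr0, by rwa [hr], fun l hl => ⟨?_, ?_⟩⟩
  · rintro rfl
    rw [norm_zero] at hl
    exact hr0.ne hl
  · rw [hl, hr]
    exact mul_one_sub_tanh_div_eq_zero_of_tanh_eq l (by linarith) hμ
end

section
/- Duhamel–commutator identity: let n be a nonempty finite type, H a self-adjoint matrix in Matrix n n ℂ, β > 0, and ρ = exp(−βH)/Tr(exp(−βH)). Then for all A, C ∈ Matrix n n ℂ: ∫₀^β Tr(ρ·A·exp(−uH)·(HC − CH)·exp(uH)) du = Tr(ρ·(AC − CA)). (That is, β·(A*, [H,C])_∼ = ω([A*,C]) where (·,·)_∼ is the Duhamel two-point function.) -/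
/-!
Differentiating `u ↦ Tr(ρ A e^{-uH} C e^{uH})` gives minus the integrand, so by the fundamental
theorem of calculus the integral is `Tr(ρ A C) - Tr(ρ A e^{-βH} C e^{βH})`. Since `ρ` is a multiple
of `e^{-βH}`, cyclicity of the trace turns the second term into `Tr(ρ C A)` (the KMS condition).
-/

open Matrix NormedSpace

section HeisenbergEvolution

variable {𝕂 𝔸 : Type*} [RCLike 𝕂] [NormedRing 𝔸] [NormedAlgebra 𝕂 𝔸] [NormedAlgebra ℝ 𝔸]
  [IsScalarTower ℝ 𝕂 𝔸] [CompleteSpace 𝔸]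

theorem hasDerivAt_exp_ofReal_smul (x : 𝔸) (t : ℝ) :
    HasDerivAt (fun t : ℝ => exp ((t : 𝕂) • x)) (x * exp ((t : 𝕂) • x)) t := by
  simpa only [RCLike.real_smul_eq_coe_smul (K := 𝕂)] using hasDerivAt_exp_smul_const' x t

theorem hasDerivAt_exp_neg_ofReal_smul (x : 𝔸) (t : ℝ) :
    HasDerivAt (fun t : ℝ => exp ((-(t : 𝕂)) • x)) (-(x * exp ((-(t : 𝕂)) • x))) t := by
  simpa [Function.comp_def] using
    (hasDerivAt_exp_ofReal_smul (𝕂 := 𝕂) x (-t)).scomp t (hasDerivAt_neg t)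

theorem hasDerivAt_exp_neg_ofReal_smul_mul_mul_exp (H C : 𝔸) (t : ℝ) :
    HasDerivAt (fun t : ℝ => exp ((-(t : 𝕂)) • H) * C * exp ((t : 𝕂) • H))
      (exp ((-(t : 𝕂)) • H) * (C * H - H * C) * exp ((t : 𝕂) • H)) t := by
  have hcomm : H * exp ((-(t : 𝕂)) • H) = exp ((-(t : 𝕂)) • H) * H :=
    ((Commute.refl H).smul_right _).exp_right.eq
  refine (((hasDerivAt_exp_neg_ofReal_smul (𝕂 := 𝕂) H t).mul_const C).mul
    (hasDerivAt_exp_ofReal_smul (𝕂 := 𝕂) H t)).congr_deriv ?_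
  rw [hcomm]
  noncomm_ring

end HeisenbergEvolution

open scoped Matrix.Norms.Operator in
theorem HasDerivAt.matrix_trace {n 𝕜 : Type*} [Fintype n] [RCLike 𝕜]
    {f : ℝ → Matrix n n 𝕜} {f' : Matrix n n 𝕜} {t : ℝ} (hf : HasDerivAt f f' t) :
    HasDerivAt (fun t => (f t).trace) f'.trace t :=
  (traceLinearMap n ℝ 𝕜).toContinuousLinearMap.hasFDerivAt.comp_hasDerivAt t hf

namespace Matrix

variable {m : Type*} [Fintype m] [DecidableEq m]

theorem hasDerivAt_trace_mul_exp_neg_ofReal_smul_mul_mul_exp (X H C : Matrix m m ℂ) (t : ℝ) :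
    HasDerivAt (fun t : ℝ => trace (X * (exp ((-(t : ℂ)) • H) * C * exp ((t : ℂ) • H))))
      (trace (X * (exp ((-(t : ℂ)) • H) * (C * H - H * C) * exp ((t : ℂ) • H)))) t := by
  open scoped Matrix.Norms.Operator in
  exact ((hasDerivAt_exp_neg_ofReal_smul_mul_mul_exp H C t).const_mul X).matrix_trace

theorem exp_mul_exp_neg {𝔸 : Type*} [NormedRing 𝔸] [NormedAlgebra ℚ 𝔸] [CompleteSpace 𝔸]
    (B : Matrix m m 𝔸) : exp B * exp (-B) = 1 := by
  rw [← exp_add_of_commute _ _ (Commute.refl B).neg_right, add_neg_cancel, exp_zero]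

theorem trace_smul_exp_neg_mul_mul_exp_neg_mul_mul_exp {𝔸 : Type*} [NormedCommRing 𝔸]
    [NormedAlgebra ℚ 𝔸] [CompleteSpace 𝔸] (c : 𝔸) (B X Y : Matrix m m 𝔸) :
    trace (c • exp (-B) * X * (exp (-B) * Y * exp B)) = trace (c • exp (-B) * (Y * X)) := by
  rw [← Matrix.mul_assoc, trace_mul_comm, ← Matrix.mul_assoc, ← Matrix.mul_assoc,
    ← Matrix.mul_assoc, mul_smul_comm, exp_mul_exp_neg]
  simp only [smul_mul_assoc, Matrix.one_mul, trace_smul]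
  rw [Matrix.mul_assoc, trace_mul_comm, Matrix.mul_assoc]

end Matrix

theorem duhamel_commutator_identity_general
    (n : Type*) [Fintype n] [DecidableEq n]
    (H : Matrix n n ℂ) (β : ℝ)
    (ρ : Matrix n n ℂ)
    (hρ : ρ = (Matrix.trace (NormedSpace.exp ((-(β : ℂ)) • H)))⁻¹ •
      NormedSpace.exp ((-(β : ℂ)) • H))
    (A C : Matrix n n ℂ) :
    (∫ u in (0 : ℝ)..β,
        Matrix.trace (ρ * A * NormedSpace.exp ((-(u : ℂ)) • H) * (H * C - C * H) *
          NormedSpace.exp ((u : ℂ) • H))) =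
      Matrix.trace (ρ * (A * C - C * A)) := by
  have hderiv (u : ℝ) : HasDerivAt
      (fun u : ℝ => -trace (ρ * A * (exp ((-(u : ℂ)) • H) * C * exp ((u : ℂ) • H))))
      (trace (ρ * A * exp ((-(u : ℂ)) • H) * (H * C - C * H) * exp ((u : ℂ) • H))) u := by
    refine (hasDerivAt_trace_mul_exp_neg_ofReal_smul_mul_mul_exp (ρ * A) H C u).neg.congr_deriv ?_
    rw [← trace_neg]
    simp only [mul_sub, sub_mul, Matrix.mul_assoc, neg_sub]
  have hcont : Continuous fun u : ℝ =>
      trace (ρ * A * exp ((-(u : ℂ)) • H) * (H * C - C * H) * exp ((u : ℂ) • H)) := by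
    simpa only [Matrix.mul_assoc] using continuous_iff_continuousAt.2 fun u =>
      (hasDerivAt_trace_mul_exp_neg_ofReal_smul_mul_mul_exp (ρ * A) H (H * C - C * H) u).continuousAt
  rw [intervalIntegral.integral_eq_sub_of_hasDerivAt (fun u _ => hderiv u)
    (hcont.intervalIntegrable 0 β), hρ, neg_smul, trace_smul_exp_neg_mul_mul_exp_neg_mul_mul_exp]
  simp only [mul_sub, trace_sub, Complex.ofReal_zero, neg_zero, zero_smul, exp_zero, mul_one,
    one_mul, Matrix.mul_assoc]
  ring

/-- Duhamel–commutator identity: for self-adjoint H, β > 0 and the Gibbs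
density matrix ρ = exp(−βH)/Tr(exp(−βH)), for all A, C:
∫₀^β Tr(ρ·A·exp(−uH)·(HC − CH)·exp(uH)) du = Tr(ρ·(AC − CA)). -/
theorem duhamel_commutator_identity
    (n : Type*) [Fintype n] [DecidableEq n] [Nonempty n]
    (H : Matrix n n ℂ) (hH : H.IsHermitian) (β : ℝ) (hβ : 0 < β)
    (ρ : Matrix n n ℂ)
    (hρ : ρ = (Matrix.trace (NormedSpace.exp ((-(β : ℂ)) • H)))⁻¹ •
      NormedSpace.exp ((-(β : ℂ)) • H))
    (A C : Matrix n n ℂ) :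
    (∫ u in (0 : ℝ)..β,
        Matrix.trace (ρ * A * NormedSpace.exp ((-(u : ℂ)) • H) * (H * C - C * H) *
          NormedSpace.exp ((u : ℂ) • H))) =
      Matrix.trace (ρ * (A * C - C * A)) :=
  duhamel_commutator_identity_general n H β ρ hρ A C
end

section
/- Bogoliubov inequality: let n be a nonempty finite type, H a self-adjoint matrix in Matrix n n ℂ, β > 0, and ρ = exp(−βH)/Tr(exp(−βH)). Then for all A, B ∈ Matrix n n ℂ: the Duhamel two-point function (B,B)_∼ is a nonnegative real number, Tr(ρ·[Aᴴ,[H,A]]) is a nonnegative real number, and |Tr(ρ·[Aᴴ,B])|² ≤ β · Tr(ρ·[Aᴴ,[H,A]]) · (B,B)_∼. -/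
open Matrix

/-- The Duhamel two-point function
(A,B)_∼ = (1/β)·∫₀^β Tr(ρ·Aᴴ·exp(−uH)·B·exp(uH)) du. -/
noncomputable def duhamel {n : Type*} [Fintype n] [DecidableEq n]
    (H : Matrix n n ℂ) (β : ℝ) (ρ : Matrix n n ℂ) (A B : Matrix n n ℂ) : ℂ :=
  (1 / (β : ℂ)) * ∫ u in (0 : ℝ)..β,
    Matrix.trace (ρ * Aᴴ * NormedSpace.exp ((-(u : ℂ)) • H) * B *
      NormedSpace.exp ((u : ℂ) • H))

/-!
Write `X'` for the matrix of `X` in an orthonormal eigenbasis of `H`, with eigenvalues `E`. For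
`ρ = c • exp(-βH)` the Duhamel function is then a weighted sum
`(X,Y)_∼ = ∑ᵢⱼ wᵢⱼ · conj X'ᵢⱼ · Y'ᵢⱼ` with weights `wᵢⱼ = (c/β) ∫₀^β e^{-uEᵢ-(β-u)Eⱼ} du ≥ 0`,
so it is a positive semidefinite Hermitian form and obeys the Cauchy–Schwarz inequality.
Since `(Eᵢ - Eⱼ) ∫₀^β e^{-uEᵢ-(β-u)Eⱼ} du = e^{-βEⱼ} - e^{-βEᵢ}`, the same weights show
`Tr(ρ[Xᴴ,Y]) = β ([H,X],Y)_∼`. Hence `Tr(ρ[Aᴴ,[H,A]]) = β ([H,A],[H,A])_∼ ≥ 0`, and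
`|Tr(ρ[Aᴴ,B])|² = β² |([H,A],B)_∼|² ≤ β² ([H,A],[H,A])_∼ (B,B)_∼`.
-/

open Unitary
open scoped ComplexOrder

noncomputable def duhamelKernel (β a b : ℝ) : ℝ :=
  ∫ u in (0 : ℝ)..β, Real.exp (-(u * a) - (β - u) * b)

theorem duhamelKernel_pos {β : ℝ} (hβ : 0 < β) (a b : ℝ) : 0 < duhamelKernel β a b :=
  intervalIntegral.intervalIntegral_pos_of_pos (Continuous.intervalIntegrable (by fun_prop) _ _)
    (fun _ => Real.exp_pos _) hβ

theorem sub_mul_duhamelKernel (β a b : ℝ) :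
    (a - b) * duhamelKernel β a b = Real.exp (-(β * b)) - Real.exp (-(β * a)) := by
  have hkernel : duhamelKernel β a b = ∫ u in (0 : ℝ)..β, Real.exp (u * (b - a) - β * b) :=
    intervalIntegral.integral_congr fun u _ => congrArg Real.exp (by ring)
  have hftc := intervalIntegral.integral_eq_sub_of_hasDerivAt
    (fun u _ => ((hasDerivAt_mul_const (b - a)).sub_const (β * b)).exp)
    (Continuous.intervalIntegrable (by fun_prop) 0 β)
  rw [intervalIntegral.integral_mul_const, ← hkernel, zero_mul, zero_sub,
    show β * (b - a) - β * b = -(β * a) by ring] at hftc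
  linear_combination -hftc

theorem norm_sum_mul_star_mul_sq_le {ι : Type*} (s : Finset ι) (w : ι → ℝ)
    (hw : ∀ i ∈ s, 0 ≤ w i) (x y : ι → ℂ) :
    ‖∑ i ∈ s, (w i : ℂ) * (star (x i) * y i)‖ ^ 2 ≤
      (∑ i ∈ s, (w i : ℂ) * (star (x i) * x i)).re *
        (∑ i ∈ s, (w i : ℂ) * (star (y i) * y i)).re := by
  have hself (z : ι → ℂ) :
      (∑ i ∈ s, (w i : ℂ) * (star (z i) * z i)).re = ∑ i ∈ s, w i * ‖z i‖ ^ 2 := by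
    simp [Complex.re_sum, Complex.sq_norm, Complex.normSq_apply]
  have htriangle :
      ‖∑ i ∈ s, (w i : ℂ) * (star (x i) * y i)‖ ≤ ∑ i ∈ s, w i * ‖x i‖ * ‖y i‖ := by
    refine (norm_sum_le _ _).trans (Finset.sum_le_sum fun i hi => ?_)
    simp [abs_of_nonneg (hw i hi), mul_assoc]
  rw [hself, hself]
  refine (pow_le_pow_left₀ (norm_nonneg _) htriangle 2).trans ?_
  exact Finset.sum_sq_le_sum_mul_sum_of_sq_le_mul s (fun i hi => by have := hw i hi; positivity)
    (fun i hi => by have := hw i hi; positivity) fun i _ => le_of_eq (by ring)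

section Diagonal

variable {n R : Type*} [Fintype n] [DecidableEq n] [CommRing R] [StarRing R]

theorem trace_diagonal_mul_conjTranspose_mul_diagonal_mul_mul_diagonal (a b d : n → R)
    (X Y : Matrix n n R) :
    trace (diagonal a * Xᴴ * diagonal b * Y * diagonal d) =
      ∑ i, ∑ j, a j * d j * b i * (star (X i j) * Y i j) := by
  have hleft (j i : n) : (diagonal a * Xᴴ * diagonal b) j i = a j * star (X i j) * b i := by
    rw [mul_diagonal, diagonal_mul, conjTranspose_apply]
  have hdiag (j : n) : (diagonal a * Xᴴ * diagonal b * Y * diagonal d) j j =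
      ∑ i, a j * star (X i j) * b i * Y i j * d j := by
    rw [mul_diagonal, mul_apply, Finset.sum_mul]
    simp only [hleft]
  rw [trace, Finset.sum_comm]
  simp only [diag_apply, hdiag]
  refine Finset.sum_congr rfl fun i _ => Finset.sum_congr rfl fun j _ => by ring

theorem trace_diagonal_mul_conjTranspose_commutator (a : n → R) (X Y : Matrix n n R) :
    trace (diagonal a * (Xᴴ * Y - Y * Xᴴ)) =
      ∑ i, ∑ j, (a j - a i) * (star (X i j) * Y i j) := by
  simp only [trace, diag_apply, diagonal_mul, Matrix.sub_apply]
  simp only [mul_apply, conjTranspose_apply, Finset.mul_sum, mul_sub, Finset.sum_sub_distrib]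
  rw [Finset.sum_comm (f := fun j i => a j * (star (X i j) * Y i j))]
  simp only [← Finset.sum_sub_distrib]
  refine Finset.sum_congr rfl fun i _ => Finset.sum_congr rfl fun j _ => by ring

end Diagonal

section Eigenbasis

variable {n : Type*} [Fintype n] [DecidableEq n]

theorem diagonal_mul_sub_mul_diagonal_apply {R : Type*} [CommRing R] (E : n → R)
    (X : Matrix n n R) (i j : n) :
    (diagonal E * X - X * diagonal E) i j = (E i - E j) * X i j := by
  rw [Matrix.sub_apply, diagonal_mul, mul_diagonal, sub_mul, mul_comm (X i j)]

theorem exp_smul_diagonal (t : ℂ) (E : n → ℂ) :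
    NormedSpace.exp (t • diagonal E) = diagonal fun i => Complex.exp (t * E i) := by
  rw [← diagonal_smul, Matrix.exp_diagonal]
  congr 1
  funext i
  simp [Complex.exp_eq_exp_ℂ]

theorem exp_conjStarAlgAut (u : unitary (Matrix n n ℂ)) (X : Matrix n n ℂ) :
    NormedSpace.exp (conjStarAlgAut ℂ _ u X) = conjStarAlgAut ℂ _ u (NormedSpace.exp X) := by
  have hcont : Continuous (conjStarAlgAut ℂ (Matrix n n ℂ) u) := by
    change Continuous fun X => (u : Matrix n n ℂ) * X * star (u : Matrix n n ℂ)
    fun_prop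
  open scoped Norms.Operator in
  exact (NormedSpace.map_exp _ hcont X).symm

theorem trace_conjStarAlgAut (u : unitary (Matrix n n ℂ)) (X : Matrix n n ℂ) :
    trace (conjStarAlgAut ℂ _ u X) = trace X := by
  rw [conjStarAlgAut_apply, trace_mul_cycle, coe_star_mul_self, one_mul]

variable {H : Matrix n n ℂ} {u : unitary (Matrix n n ℂ)} {E : n → ℝ}

theorem conjStarAlgAut_exp_smul (hu : conjStarAlgAut ℂ _ u H = diagonal (RCLike.ofReal ∘ E))
    (t : ℂ) :
    conjStarAlgAut ℂ _ u (NormedSpace.exp (t • H)) =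
      diagonal fun i => Complex.exp (t * E i) := by
  rw [← exp_conjStarAlgAut, map_smul, hu, exp_smul_diagonal]
  rfl

theorem trace_exp_smul (hu : conjStarAlgAut ℂ _ u H = diagonal (RCLike.ofReal ∘ E)) (t : ℝ) :
    trace (NormedSpace.exp ((t : ℂ) • H)) = ((∑ i, Real.exp (t * E i) : ℝ) : ℂ) := by
  rw [← trace_conjStarAlgAut u, conjStarAlgAut_exp_smul hu, trace_diagonal]
  push_cast
  rfl

theorem conjStarAlgAut_commutator_apply
    (hu : conjStarAlgAut ℂ _ u H = diagonal (RCLike.ofReal ∘ E)) (X : Matrix n n ℂ) (i j : n) :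
    conjStarAlgAut ℂ _ u (H * X - X * H) i j =
      ((E i - E j : ℝ) : ℂ) * conjStarAlgAut ℂ _ u X i j := by
  rw [map_sub, map_mul, map_mul, hu, diagonal_mul_sub_mul_diagonal_apply]
  push_cast
  rfl

theorem trace_duhamel_integrand_eq_sum
    (hu : conjStarAlgAut ℂ _ u H = diagonal (RCLike.ofReal ∘ E)) (β c t : ℝ)
    (X Y : Matrix n n ℂ) :
    trace ((c : ℂ) • NormedSpace.exp ((-(β : ℂ)) • H) * Xᴴ * NormedSpace.exp ((-(t : ℂ)) • H) *
        Y * NormedSpace.exp ((t : ℂ) • H)) =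
      ∑ i, ∑ j, ((c * Real.exp (-(t * E i) - (β - t) * E j) : ℝ) : ℂ) *
        (star (conjStarAlgAut ℂ _ u X i j) * conjStarAlgAut ℂ _ u Y i j) := by
  rw [← trace_conjStarAlgAut u, ← star_eq_conjTranspose]
  simp only [map_mul, map_smul, map_star, conjStarAlgAut_exp_smul hu, smul_mul, trace_smul]
  rw [star_eq_conjTranspose, trace_diagonal_mul_conjTranspose_mul_diagonal_mul_mul_diagonal,
    Finset.smul_sum]
  refine Finset.sum_congr rfl fun i _ => ?_
  rw [Finset.smul_sum]
  refine Finset.sum_congr rfl fun j _ => ?_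
  rw [smul_eq_mul, ← mul_assoc]
  congr 1
  push_cast
  rw [mul_assoc, ← Complex.exp_add, ← Complex.exp_add]
  ring_nf

theorem duhamel_eq_sum (hu : conjStarAlgAut ℂ _ u H = diagonal (RCLike.ofReal ∘ E))
    (β c : ℝ) (X Y : Matrix n n ℂ) :
    duhamel H β ((c : ℂ) • NormedSpace.exp ((-(β : ℂ)) • H)) X Y =
      ∑ i, ∑ j, ((c / β * duhamelKernel β (E i) (E j) : ℝ) : ℂ) *
        (star (conjStarAlgAut ℂ _ u X i j) * conjStarAlgAut ℂ _ u Y i j) := by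
  rw [duhamel, intervalIntegral.integral_congr fun t _ =>
      trace_duhamel_integrand_eq_sum hu β c t X Y,
    intervalIntegral.integral_finsetSum fun i _ => Continuous.intervalIntegrable (by fun_prop) 0 β,
    Finset.mul_sum]
  refine Finset.sum_congr rfl fun i _ => ?_
  rw [intervalIntegral.integral_finsetSum fun j _ => Continuous.intervalIntegrable (by fun_prop) 0 β,
    Finset.mul_sum]
  refine Finset.sum_congr rfl fun j _ => ?_
  rw [intervalIntegral.integral_mul_const, intervalIntegral.integral_ofReal,
    intervalIntegral.integral_const_mul, ← duhamelKernel]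
  push_cast
  ring

theorem trace_smul_exp_mul_commutator_eq_sum
    (hu : conjStarAlgAut ℂ _ u H = diagonal (RCLike.ofReal ∘ E)) (β c : ℝ) (X Y : Matrix n n ℂ) :
    trace ((c : ℂ) • NormedSpace.exp ((-(β : ℂ)) • H) * (Xᴴ * Y - Y * Xᴴ)) =
      ∑ i, ∑ j, ((c * (Real.exp (-(β * E j)) - Real.exp (-(β * E i))) : ℝ) : ℂ) *
        (star (conjStarAlgAut ℂ _ u X i j) * conjStarAlgAut ℂ _ u Y i j) := by
  rw [← trace_conjStarAlgAut u, ← star_eq_conjTranspose]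
  simp only [map_mul, map_sub, map_smul, map_star, conjStarAlgAut_exp_smul hu, smul_mul,
    trace_smul]
  rw [star_eq_conjTranspose, trace_diagonal_mul_conjTranspose_commutator, Finset.smul_sum]
  refine Finset.sum_congr rfl fun i _ => ?_
  rw [Finset.smul_sum]
  refine Finset.sum_congr rfl fun j _ => ?_
  rw [smul_eq_mul, ← mul_assoc]
  push_cast
  ring_nf

end Eigenbasis

section Gibbs

variable {n : Type*} [Fintype n] [DecidableEq n] {H : Matrix n n ℂ} {β : ℝ}

theorem duhamel_self_nonneg (hH : H.IsHermitian) (hβ : 0 < β) {c : ℝ} (hc : 0 ≤ c)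
    (X : Matrix n n ℂ) :
    0 ≤ duhamel H β ((c : ℂ) • NormedSpace.exp ((-(β : ℂ)) • H)) X X := by
  rw [duhamel_eq_sum hH.conjStarAlgAut_star_eigenvectorUnitary]
  refine Finset.sum_nonneg fun i _ => Finset.sum_nonneg fun j _ =>
    mul_nonneg ?_ (star_mul_self_nonneg _)
  exact Complex.zero_le_real.2 <| mul_nonneg (div_nonneg hc hβ.le) (duhamelKernel_pos hβ _ _).le

theorem norm_duhamel_sq_le (hH : H.IsHermitian) (hβ : 0 < β) {c : ℝ} (hc : 0 ≤ c)
    (X Y : Matrix n n ℂ) :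
    ‖duhamel H β ((c : ℂ) • NormedSpace.exp ((-(β : ℂ)) • H)) X Y‖ ^ 2 ≤
      (duhamel H β ((c : ℂ) • NormedSpace.exp ((-(β : ℂ)) • H)) X X).re *
        (duhamel H β ((c : ℂ) • NormedSpace.exp ((-(β : ℂ)) • H)) Y Y).re := by
  simp only [duhamel_eq_sum hH.conjStarAlgAut_star_eigenvectorUnitary,
    ← Fintype.sum_prod_type']
  exact norm_sum_mul_star_mul_sq_le _ _
    (fun _ _ => mul_nonneg (div_nonneg hc hβ.le) (duhamelKernel_pos hβ _ _).le) _ _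

theorem trace_mul_commutator_eq_duhamel (hH : H.IsHermitian) (hβ : β ≠ 0) (c : ℝ)
    (X Y : Matrix n n ℂ) :
    trace ((c : ℂ) • NormedSpace.exp ((-(β : ℂ)) • H) * (Xᴴ * Y - Y * Xᴴ)) =
      β * duhamel H β ((c : ℂ) • NormedSpace.exp ((-(β : ℂ)) • H)) (H * X - X * H) Y := by
  have hu := hH.conjStarAlgAut_star_eigenvectorUnitary
  rw [trace_smul_exp_mul_commutator_eq_sum hu, duhamel_eq_sum hu, Finset.mul_sum]
  refine Finset.sum_congr rfl fun i _ => ?_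
  rw [Finset.mul_sum]
  refine Finset.sum_congr rfl fun j _ => ?_
  rw [conjStarAlgAut_commutator_apply hu, star_mul', Complex.star_def, Complex.conj_ofReal,
    ← sub_mul_duhamelKernel]
  push_cast
  field_simp

end Gibbs

theorem bogoliubov_inequality_general
    (n : Type*) [Fintype n] [DecidableEq n]
    (H : Matrix n n ℂ) (hH : H.IsHermitian) (β : ℝ) (hβ : 0 < β)
    (ρ : Matrix n n ℂ)
    (hρ : ρ = (Matrix.trace (NormedSpace.exp ((-(β : ℂ)) • H)))⁻¹ •
      NormedSpace.exp ((-(β : ℂ)) • H))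
    (A B : Matrix n n ℂ) :
    (duhamel H β ρ B B).im = 0 ∧ 0 ≤ (duhamel H β ρ B B).re ∧
    (Matrix.trace (ρ * (Aᴴ * (H * A - A * H) - (H * A - A * H) * Aᴴ))).im = 0 ∧
    0 ≤ (Matrix.trace (ρ * (Aᴴ * (H * A - A * H) - (H * A - A * H) * Aᴴ))).re ∧
    ‖Matrix.trace (ρ * (Aᴴ * B - B * Aᴴ))‖ ^ 2 ≤
      β * (Matrix.trace (ρ * (Aᴴ * (H * A - A * H) - (H * A - A * H) * Aᴴ))).re *
        (duhamel H β ρ B B).re := by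
  set Z := ∑ i, Real.exp (-β * hH.eigenvalues i)
  have hc : 0 ≤ Z⁻¹ := inv_nonneg.2 (Finset.sum_nonneg fun i _ => (Real.exp_pos _).le)
  obtain rfl : ρ = ((Z⁻¹ : ℝ) : ℂ) • NormedSpace.exp ((-(β : ℂ)) • H) := by
    rw [hρ, ← Complex.ofReal_neg, trace_exp_smul hH.conjStarAlgAut_star_eigenvectorUnitary,
      Complex.ofReal_inv]
  have hBB := Complex.nonneg_iff.1 (duhamel_self_nonneg hH hβ hc B)
  have hCC := Complex.nonneg_iff.1 <|
    mul_nonneg (Complex.zero_le_real.2 hβ.le) (duhamel_self_nonneg hH hβ hc (H * A - A * H))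
  rw [trace_mul_commutator_eq_duhamel hH hβ.ne', trace_mul_commutator_eq_duhamel hH hβ.ne']
  refine ⟨hBB.2.symm, hBB.1, hCC.2.symm, hCC.1, ?_⟩
  rw [norm_mul, Complex.norm_real, Real.norm_of_nonneg hβ.le, Complex.re_ofReal_mul, mul_pow]
  calc β ^ 2 * _ ≤ β ^ 2 * (_ * _) :=
        mul_le_mul_of_nonneg_left (norm_duhamel_sq_le hH hβ hc _ _) (sq_nonneg β)
    _ = _ := by ring

/-- Bogoliubov inequality: for self-adjoint H, β > 0 and the Gibbs density
matrix ρ = exp(−βH)/Tr(exp(−βH)), for all A, B: the Duhamel two-point function (B,B)_∼ is a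
nonnegative real number, Tr(ρ·[Aᴴ,[H,A]]) is a nonnegative real number, and
|Tr(ρ·[Aᴴ,B])|² ≤ β · Tr(ρ·[Aᴴ,[H,A]]) · (B,B)_∼. -/
theorem bogoliubov_inequality
    (n : Type*) [Fintype n] [DecidableEq n] [Nonempty n]
    (H : Matrix n n ℂ) (hH : H.IsHermitian) (β : ℝ) (hβ : 0 < β)
    (ρ : Matrix n n ℂ)
    (hρ : ρ = (Matrix.trace (NormedSpace.exp ((-(β : ℂ)) • H)))⁻¹ •
      NormedSpace.exp ((-(β : ℂ)) • H))
    (A B : Matrix n n ℂ) :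
    (duhamel H β ρ B B).im = 0 ∧ 0 ≤ (duhamel H β ρ B B).re ∧
    (Matrix.trace (ρ * (Aᴴ * (H * A - A * H) - (H * A - A * H) * Aᴴ))).im = 0 ∧
    0 ≤ (Matrix.trace (ρ * (Aᴴ * (H * A - A * H) - (H * A - A * H) * Aᴴ))).re ∧
    ‖Matrix.trace (ρ * (Aᴴ * B - B * Aᴴ))‖ ^ 2 ≤
      β * (Matrix.trace (ρ * (Aᴴ * (H * A - A * H) - (H * A - A * H) * Aᴴ))).re *
        (duhamel H β ρ B B).re :=
  bogoliubov_inequality_general n H hH β hβ ρ hρ A B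
end

section
/- Convergence of k-mode fluctuation variances: let ν ≥ 1, let φ : ℤ^ν → ℂ be absolutely summable (∑_{z∈ℤ^ν} |φ(z)| < ∞), and let k ∈ ℝ^ν satisfy exp(2i·k_j) ≠ 1 for every component j. Then lim_{n→∞} (2n+1)^{−ν} · ∑_{x,y ∈ Λ_n} φ(y−x)·cos(k·x)·cos(k·y) = (1/4)·(Φ(k) + Φ(−k)), where Λ_n = {−n,…,n}^ν ⊂ ℤ^ν, k·x = ∑_j k_j x_j, and Φ(k) = ∑_{z∈ℤ^ν} φ(z)·exp(−i k·z). In particular the limit is finite. -/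
/-!
Substituting y = x + z turns the normalized double sum into `∑' z, φ z * modeWeight k n z`, where
`modeWeight k n z = |Λ_n|⁻¹ ∑ cos(k·x) cos(k·(x + z))` over the x with x, x + z ∈ Λ_n. By the
product-to-sum formula the summand is `(cos(k·z) + cos(2k·x + k·z)) / 2`. The overlap of Λ_n with
its translate has `(1 + o(1)) |Λ_n|` points, while the oscillating part is the real part of a
product of one-dimensional geometric sums with ratios `exp(2ik_j) ≠ 1`, hence bounded uniformly in
n. So `modeWeight k n z → cos(k·z) / 2`; as `|modeWeight k n z| ≤ 1` and φ is absolutely summable,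
dominated convergence for series gives the limit `∑' z, φ z * cos(k·z) / 2 = (Φ(k) + Φ(-k)) / 4`.
-/

open Filter Finset Topology

lemma norm_sum_Icc_zpow_le {𝕜 : Type*} [NormedDivisionRing 𝕜] {r : 𝕜} (hr : ‖r‖ = 1)
    (hr1 : r ≠ 1) (a b : ℤ) : ‖∑ m ∈ Icc a b, r ^ m‖ ≤ 2 / ‖r - 1‖ := by
  have hr0 : r ≠ 0 := by rintro rfl; simp at hr
  have hsum : ∑ m ∈ Icc a b, r ^ m = r ^ a * ∑ i ∈ range (b + 1 - a).toNat, r ^ i := by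
    rw [Int.Icc_eq_finset_map, sum_map, mul_sum]
    refine sum_congr rfl fun i _ => ?_
    simp [zpow_add₀ hr0]
  rw [hsum, geom_sum_eq hr1, norm_mul, norm_zpow, hr, one_zpow, one_mul, norm_div]
  gcongr
  calc ‖r ^ (b + 1 - a).toNat - 1‖ ≤ ‖r ^ (b + 1 - a).toNat‖ + ‖(1 : 𝕜)‖ := norm_sub_le _ _
    _ = 2 := by rw [norm_pow, hr, one_pow, norm_one]; norm_num

lemma norm_sum_Icc_prod_zpow_le {ι 𝕜 : Type*} [Fintype ι] [DecidableEq ι] [NormedField 𝕜]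
    {r : ι → 𝕜} (hr : ∀ j, ‖r j‖ = 1) (hr1 : ∀ j, r j ≠ 1) (a b : ι → ℤ) :
    ‖∑ x ∈ Icc a b, ∏ j, r j ^ x j‖ ≤ ∏ j, 2 / ‖r j - 1‖ := by
  rw [Pi.Icc_eq, ← prod_univ_sum, norm_prod]
  exact prod_le_prod (fun _ _ => norm_nonneg _)
    fun j _ => norm_sum_Icc_zpow_le (hr j) (hr1 j) (a j) (b j)

lemma sum_sum_eq_tsum_sum_filter_add {G M : Type*} [AddCommGroup G] [DecidableEq G]
    [AddCommMonoid M] [TopologicalSpace M] [ContinuousAdd M] [T2Space M]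
    (s : Finset G) (f : G → G → M) :
    ∑ x ∈ s, ∑ y ∈ s, f x y = ∑' z, ∑ x ∈ s with x + z ∈ s, f x (x + z) := by
  have hshift : ∀ x, ∑ y ∈ s, f x y = ∑' z, if x + z ∈ s then f x (x + z) else 0 := fun x => by
    refine .trans ?_ ((Equiv.addLeft x).tsum_eq fun y => if y ∈ s then f x y else 0).symm
    rw [tsum_eq_sum (s := s) fun y hy => if_neg hy, sum_ite_mem, inter_self]
  simp_rw [hshift, sum_filter]
  refine (Summable.tsum_finsetSum fun x _ => ?_).symm
  exact summable_of_ne_finset_zero (s := s.image (· - x)) fun z hz => if_neg fun h => hz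
    (mem_image.2 ⟨x + z, h, add_sub_cancel_left x z⟩)

lemma tsum_mul_ofReal_cos_div_two {β : Type*} {φ : β → ℂ} (hφ : Summable fun z => ‖φ z‖)
    (θ : β → ℝ) : ∑' z, φ z * (Real.cos (θ z) / 2 : ℝ) =
      1 / 4 * (∑' z, φ z * Complex.exp (-Complex.I * θ z) +
        ∑' z, φ z * Complex.exp (Complex.I * θ z)) := by
  have hsumm : ∀ c : ℂ, c.re = 0 →
      Summable fun z => φ z * Complex.exp (c * θ z) := fun c hc =>
    hφ.of_norm_bounded fun z => by rw [norm_mul, Complex.norm_exp]; simp [hc]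
  rw [← (hsumm _ (by simp)).tsum_add (hsumm _ Complex.I_re), ← tsum_mul_left]
  refine tsum_congr fun z => ?_
  have h : 2 * Complex.cos (θ z) =
      Complex.exp (-Complex.I * θ z) + Complex.exp (Complex.I * θ z) := by
    rw [Complex.two_cos]; ring_nf
  push_cast
  linear_combination φ z / 4 * h

lemma tendsto_two_mul_add_one_atTop : Tendsto (fun n : ℕ => 2 * (n : ℝ) + 1) atTop atTop :=
  tendsto_atTop_add_const_right _ _ (tendsto_natCast_atTop_atTop.const_mul_atTop two_pos)

section Phase

variable {ι : Type*} [Fintype ι]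

noncomputable def phase (k : ι → ℝ) (x : ι → ℤ) : ℝ := ∑ j, k j * x j

lemma phase_add (k : ι → ℝ) (x y : ι → ℤ) : phase k (x + y) = phase k x + phase k y := by
  simp only [phase, Pi.add_apply, Int.cast_add, mul_add, sum_add_distrib]

lemma exp_two_phase_mul_I (k : ι → ℝ) (x : ι → ℤ) :
    Complex.exp (2 * phase k x * Complex.I) = ∏ j, Complex.exp (2 * Complex.I * k j) ^ x j := by
  simp only [phase, ← Complex.exp_int_mul, ← Complex.exp_sum, Complex.ofReal_sum,
    Complex.ofReal_mul, Complex.ofReal_intCast, mul_sum, sum_mul]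
  congr 1; refine sum_congr rfl fun j _ => by ring

lemma abs_sum_Icc_cos_two_phase_add_le [DecidableEq ι] {k : ι → ℝ}
    (hk : ∀ j, Complex.exp (2 * Complex.I * k j) ≠ 1) (a b : ι → ℤ) (c : ℝ) :
    |∑ x ∈ Icc a b, Real.cos (2 * phase k x + c)| ≤
      ∏ j, 2 / ‖Complex.exp (2 * Complex.I * k j) - 1‖ := by
  have hre : ∑ x ∈ Icc a b, Real.cos (2 * phase k x + c) =
      (Complex.exp (c * Complex.I) *
        ∑ x ∈ Icc a b, ∏ j, Complex.exp (2 * Complex.I * k j) ^ x j).re := by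
    simp only [mul_sum, ← exp_two_phase_mul_I, ← Complex.exp_add, Complex.re_sum]
    refine sum_congr rfl fun x _ => ?_
    rw [← Complex.exp_ofReal_mul_I_re]
    push_cast; ring_nf
  rw [hre]
  refine (Complex.abs_re_le_norm _).trans ?_
  rw [norm_mul, Complex.norm_exp_ofReal_mul_I, one_mul]
  refine norm_sum_Icc_prod_zpow_le (fun j => ?_) hk a b
  rw [mul_right_comm, ← Complex.ofReal_ofNat, ← Complex.ofReal_mul, Complex.norm_exp_ofReal_mul_I]

end Phase

section Cube

variable {ι : Type*} [Fintype ι] [DecidableEq ι]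

variable (ι) in
noncomputable def cube (n : ℕ) : Finset (ι → ℤ) := Icc (fun _ => -(n : ℤ)) (fun _ => n)

noncomputable def cubeOverlap (n : ℕ) (z : ι → ℤ) : Finset (ι → ℤ) :=
  Icc (fun j => max (-n) (-n - z j)) (fun j => min n (n - z j))

lemma mem_cubeOverlap {n : ℕ} {z x : ι → ℤ} :
    x ∈ cubeOverlap n z ↔ x ∈ cube ι n ∧ x + z ∈ cube ι n := by
  simp only [cubeOverlap, cube, mem_Icc, Pi.le_def, Pi.add_apply, max_le_iff, le_min_iff]
  constructor
  · intro h
    exact ⟨⟨fun j => (h.1 j).1, fun j => (h.2 j).1⟩,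
      fun j => by linarith [(h.1 j).2], fun j => by linarith [(h.2 j).2]⟩
  · rintro ⟨⟨h1, h2⟩, h3, h4⟩
    exact ⟨fun j => ⟨h1 j, by linarith [h3 j]⟩, fun j => ⟨h2 j, by linarith [h4 j]⟩⟩

lemma card_cube (n : ℕ) : #(cube ι n) = (2 * n + 1) ^ Fintype.card ι := by
  rw [cube, Pi.card_Icc, prod_const, card_univ, Int.card_Icc]
  congr 1; omega

lemma card_cubeOverlap_le (n : ℕ) (z : ι → ℤ) :
    #(cubeOverlap n z) ≤ (2 * n + 1) ^ Fintype.card ι :=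
  card_cube (ι := ι) n ▸ card_le_card fun _ hx => (mem_cubeOverlap.1 hx).1

lemma card_cubeOverlap {n : ℕ} {z : ι → ℤ} (hz : ∀ j, (z j).natAbs ≤ n) :
    #(cubeOverlap n z) = ∏ j, (2 * n + 1 - (z j).natAbs) := by
  rw [cubeOverlap, Pi.card_Icc]
  refine prod_congr rfl fun j _ => ?_
  have := hz j
  rw [Int.card_Icc]
  omega

lemma tendsto_card_cubeOverlap_div (z : ι → ℤ) :
    Tendsto (fun n : ℕ => (#(cubeOverlap n z) : ℝ) / (2 * n + 1) ^ Fintype.card ι) atTop (𝓝 1) := by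
  have hfactor : ∀ j, Tendsto (fun n : ℕ => 1 - ((z j).natAbs : ℝ) / (2 * n + 1)) atTop (𝓝 1) :=
    fun j => by
      simpa using tendsto_const_nhds.sub (tendsto_two_mul_add_one_atTop.const_div_atTop _)
  have hprod := tendsto_finsetProd univ fun j _ => hfactor j
  rw [prod_const_one] at hprod
  refine hprod.congr' ?_
  filter_upwards [eventually_ge_atTop (univ.sup fun j => (z j).natAbs)] with n hn
  have hz : ∀ j, (z j).natAbs ≤ n := fun j =>
    (le_sup (f := fun j => (z j).natAbs) (mem_univ j)).trans hn
  rw [card_cubeOverlap hz, ← card_univ, ← prod_const, Nat.cast_prod, ← prod_div_distrib]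
  refine prod_congr rfl fun j _ => ?_
  rw [Nat.cast_sub (by linarith [hz j]), one_sub_div (by positivity)]
  push_cast; ring

lemma sum_cubeOverlap_cos_mul_cos (k : ι → ℝ) (n : ℕ) (z : ι → ℤ) :
    ∑ x ∈ cubeOverlap n z, Real.cos (phase k x) * Real.cos (phase k (x + z)) =
      #(cubeOverlap n z) * (Real.cos (phase k z) / 2) +
        (∑ x ∈ cubeOverlap n z, Real.cos (2 * phase k x + phase k z)) / 2 := by
  rw [sum_div, ← nsmul_eq_mul, ← sum_const, ← sum_add_distrib]
  refine sum_congr rfl fun x _ => ?_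
  have h := Real.two_mul_cos_mul_cos (phase k x) (phase k x + phase k z)
  rw [sub_add_cancel_left, Real.cos_neg, ← add_assoc, ← two_mul] at h
  rw [phase_add]
  linarith

noncomputable def modeWeight (k : ι → ℝ) (n : ℕ) (z : ι → ℤ) : ℝ :=
  (∑ x ∈ cubeOverlap n z, Real.cos (phase k x) * Real.cos (phase k (x + z))) /
    (2 * n + 1) ^ Fintype.card ι

lemma abs_modeWeight_le_one (k : ι → ℝ) (n : ℕ) (z : ι → ℤ) : |modeWeight k n z| ≤ 1 := by
  have hpos : (0 : ℝ) < (2 * n + 1) ^ Fintype.card ι := by positivity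
  rw [modeWeight, abs_div, abs_of_pos hpos, div_le_one hpos]
  refine (abs_sum_le_sum_abs _ _).trans <| (sum_le_card_nsmul _ _ 1 fun x _ => ?_).trans ?_
  · rw [abs_mul]
    exact mul_le_one₀ (Real.abs_cos_le_one _) (abs_nonneg _) (Real.abs_cos_le_one _)
  · rw [nsmul_one]
    exact_mod_cast card_cubeOverlap_le n z

lemma tendsto_modeWeight [Nonempty ι] {k : ι → ℝ}
    (hk : ∀ j, Complex.exp (2 * Complex.I * k j) ≠ 1) (z : ι → ℤ) :
    Tendsto (modeWeight k · z) atTop (𝓝 (Real.cos (phase k z) / 2)) := by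
  have hden : Tendsto (fun n : ℕ => (2 * (n : ℝ) + 1) ^ Fintype.card ι) atTop atTop :=
    (tendsto_pow_atTop (Fintype.card_ne_zero (α := ι))).comp tendsto_two_mul_add_one_atTop
  set C := ∏ j, 2 / ‖Complex.exp (2 * Complex.I * k j) - 1‖
  have hmain := (tendsto_card_cubeOverlap_div z).mul_const (Real.cos (phase k z) / 2)
  rw [one_mul] at hmain
  have herr : Tendsto (fun n : ℕ => (∑ x ∈ cubeOverlap n z, Real.cos (2 * phase k x + phase k z)) /
      2 / (2 * n + 1) ^ Fintype.card ι) atTop (𝓝 0) := by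
    refine squeeze_zero_norm (fun n => ?_) ((tendsto_const_nhds (x := C / 2)).div_atTop hden)
    have hpos : (0 : ℝ) < (2 * n + 1) ^ Fintype.card ι := by positivity
    rw [Real.norm_eq_abs, abs_div, abs_div, abs_two, abs_of_pos hpos]
    gcongr
    exact abs_sum_Icc_cos_two_phase_add_le hk _ _ _
  simpa only [modeWeight, sum_cubeOverlap_cos_mul_cos, add_div, mul_div_right_comm, add_zero]
    using hmain.add herr

lemma tsum_mul_modeWeight (φ : (ι → ℤ) → ℂ) (k : ι → ℝ) (n : ℕ) :
    ∑' z, φ z * modeWeight k n z = (((2 * (n : ℝ) + 1) ^ Fintype.card ι)⁻¹ : ℂ) *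
      ∑ x ∈ cube ι n, ∑ y ∈ cube ι n,
        φ (y - x) * (Real.cos (phase k x) : ℂ) * (Real.cos (phase k y) : ℂ) := by
  rw [sum_sum_eq_tsum_sum_filter_add, ← tsum_mul_left]
  refine tsum_congr fun z => ?_
  have hfilter : {x ∈ cube ι n | x + z ∈ cube ι n} = cubeOverlap n z := by
    ext x; rw [mem_filter, mem_cubeOverlap]
  rw [hfilter, modeWeight]
  push_cast
  simp only [add_sub_cancel_left, mul_sum, div_eq_inv_mul]
  exact sum_congr rfl fun x _ => by ring

end Cube

/-- convergence of k-mode fluctuation variances: for φ : ℤ^ν → ℂ absolutely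
summable and k ∈ ℝ^ν with exp(2ik_j) ≠ 1 for every component j,
lim_{n→∞} (2n+1)^{−ν} ∑_{x,y ∈ Λ_n} φ(y−x)·cos(k·x)·cos(k·y) = (1/4)(Φ(k) + Φ(−k)),
where Λ_n = {−n,…,n}^ν and Φ(k) = ∑_{z∈ℤ^ν} φ(z)·exp(−ik·z). -/
theorem k_mode_fluctuation_variance_limit
    (d : ℕ) (hd : 1 ≤ d) (φ : (Fin d → ℤ) → ℂ) (hφ : Summable fun z => ‖φ z‖)
    (k : Fin d → ℝ) (hk : ∀ j, Complex.exp (2 * Complex.I * (k j : ℂ)) ≠ 1) :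
    Tendsto (fun n : ℕ =>
        (((2 * (n : ℝ) + 1) ^ d)⁻¹ : ℂ) *
          ∑ x ∈ Finset.Icc (fun _ : Fin d => -(n : ℤ)) (fun _ : Fin d => (n : ℤ)),
            ∑ y ∈ Finset.Icc (fun _ : Fin d => -(n : ℤ)) (fun _ : Fin d => (n : ℤ)),
              φ (y - x) * (Real.cos (∑ j, k j * ((x j : ℝ))) : ℂ) *
                (Real.cos (∑ j, k j * ((y j : ℝ))) : ℂ))
      atTop
      (nhds ((1 / 4 : ℂ) *
        ((∑' z : Fin d → ℤ, φ z * Complex.exp (-Complex.I * (∑ j, k j * ((z j : ℝ))))) +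
          (∑' z : Fin d → ℤ, φ z * Complex.exp (Complex.I * (∑ j, k j * ((z j : ℝ)))))))) := by
  have : Nonempty (Fin d) := ⟨⟨0, hd⟩⟩
  have hlim := tendsto_tsum_of_dominated_convergence hφ
    (fun z => (tendsto_modeWeight hk z).ofReal.const_mul (φ z))
    (.of_forall fun n z => by
      rw [norm_mul, Complex.norm_real, Real.norm_eq_abs]
      exact mul_le_of_le_one_right (norm_nonneg _) (abs_modeWeight_le_one k n z))
  rw [tsum_mul_ofReal_cos_div_two hφ] at hlim
  exact hlim.congr fun n => by rw [tsum_mul_modeWeight, Fintype.card_fin]; rfl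
end
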